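/- Fix n ≥ 1, an index i ∈ Fin n, and a vector v ∈ ℂⁿ with v_i = 0 and v ≠ 0; set ω = ‖v‖ (Euclidean norm). Let H be the n×n complex Hermitian matrix with entries H_{jk} = [j = i]·conj(v_k) + v_j·[k = i]. Then for every γ ∈ [0,1], taking the evolution time t = arccos(γ)/ω, one has exp(−i·t·H)·e_i = γ·e_i − i·(√(1−γ²)/ω)·v. -/

import Mathlib

open Matrix

/-- Action of a matrix on the Euclidean space `ℂⁿ` by matrix-vector multiplication. -/
noncomputable def matVec {n : ℕ} (M : Matrix (Fin n) (Fin n) ℂ)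
    (ψ : EuclideanSpace ℂ (Fin n)) : EuclideanSpace ℂ (Fin n) :=
  Matrix.toEuclideanLin M ψ

/-- The Hamiltonian coupling site `i` to the mode `v`: `H_{jk} = [j = i]·conj(v_k) + v_j·[k = i]`. -/
def coupleH {n : ℕ} (i : Fin n) (v : EuclideanSpace ℂ (Fin n)) : Matrix (Fin n) (Fin n) ℂ :=
  fun j k => (if j = i then (starRingEnd ℂ) (v k) else 0) + (if k = i then v j else 0)

lemma matVec_apply {n : ℕ} (M : Matrix (Fin n) (Fin n) ℂ) (ψ : EuclideanSpace ℂ (Fin n))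
    (j : Fin n) : matVec M ψ j = ∑ k, M j k * ψ k := by
  simp [matVec, Matrix.toEuclideanLin_apply, Matrix.mulVec, dotProduct]

lemma matVec_smul_mat {n : ℕ} (a : ℂ) (M : Matrix (Fin n) (Fin n) ℂ)
    (ψ : EuclideanSpace ℂ (Fin n)) : matVec (a • M) ψ = a • matVec M ψ := by
  simp [matVec, _root_.map_smul]

lemma matVec_smul_vec {n : ℕ} (M : Matrix (Fin n) (Fin n) ℂ) (a : ℂ)
    (ψ : EuclideanSpace ℂ (Fin n)) : matVec M (a • ψ) = a • matVec M ψ := by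
  simp [matVec, _root_.map_smul]

lemma matVec_mul {n : ℕ} (M N : Matrix (Fin n) (Fin n) ℂ) (ψ : EuclideanSpace ℂ (Fin n)) :
    matVec (M * N) ψ = matVec M (matVec N ψ) := by
  ext j
  simp only [matVec_apply]
  simp [Matrix.mul_apply, Finset.sum_mul, Finset.mul_sum, mul_assoc]
  rw [Finset.sum_comm]

lemma matVec_one {n : ℕ} (ψ : EuclideanSpace ℂ (Fin n)) : matVec 1 ψ = ψ := by
  ext j
  simp [matVec_apply, Matrix.one_apply]

/-- Correctness of the single-shot protocol: with `v i = 0`, `v ≠ 0`, `ω = ‖v‖`, and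
evolution time `t = arccos(γ)/ω` for `γ ∈ [0,1]`, one has
`exp(−i·t·H)·e_i = γ·e_i − i·(√(1−γ²)/ω)·v`. -/
theorem single_shot_protocol {n : ℕ} (hn : 1 ≤ n) (i : Fin n)
    (v : EuclideanSpace ℂ (Fin n)) (hvi : v i = 0) (hv : v ≠ 0)
    (ω : ℝ) (hω : ω = ‖v‖) (γ : ℝ) (hγ0 : 0 ≤ γ) (hγ1 : γ ≤ 1)
    (t : ℝ) (ht : t = Real.arccos γ / ω) :
    matVec (NormedSpace.exp ((-(Complex.I * (t : ℂ))) • coupleH i v))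
        (EuclideanSpace.single i 1) =
      ((γ : ℂ)) • EuclideanSpace.single i 1 -
        (Complex.I * ((Real.sqrt (1 - γ ^ 2) / ω : ℝ) : ℂ)) • v := by
  classical
  have hω0 : ω ≠ 0 := by
    rw [hω]; exact norm_ne_zero_iff.mpr hv
  have hωC : (ω : ℂ) ≠ 0 := by exact_mod_cast hω0
  set e : EuclideanSpace ℂ (Fin n) := EuclideanSpace.single i 1 with he
  set H : Matrix (Fin n) (Fin n) ℂ := coupleH i v with hHdef
  set c : ℂ := -(Complex.I * (t : ℂ)) with hc
  set A : Matrix (Fin n) (Fin n) ℂ := c • H with hA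
  -- basic matrix-vector computations
  have hesingle : ∀ j : Fin n, e j = if j = i then 1 else 0 := by
    intro j; simp [he, EuclideanSpace.single_apply]
  have hHe : matVec H e = v := by
    ext j
    rw [matVec_apply]
    simp only [hHdef, coupleH, hesingle, mul_ite, mul_one, mul_zero]
    rw [Finset.sum_eq_single i]
    · simp [hvi]
    · intro k _ hk; simp [hk]
    · simp
  have hHv : matVec H v = ((ω : ℂ) ^ 2) • e := by
    have hsum : ∑ k, (starRingEnd ℂ) (v k) * v k = (ω : ℂ) ^ 2 := by
      have h1 : (inner ℂ v v : ℂ) = ((‖v‖ : ℂ)) ^ 2 := inner_self_eq_norm_sq_to_K v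
      rw [PiLp.inner_apply] at h1
      simpa [RCLike.inner_apply, hω, Complex.conj_mul'] using h1
    ext j
    rw [matVec_apply]
    simp only [hHdef, coupleH, add_mul, ite_mul, zero_mul]
    rw [Finset.sum_add_distrib]
    by_cases hj : j = i
    · subst hj
      simp [hsum, hvi, hesingle, Finset.sum_ite_eq', hvi]
    · simp [hj, hesingle, Finset.sum_ite_eq', hvi]
  have hAe : matVec A e = c • v := by rw [hA, matVec_smul_mat, hHe]
  have hA2e : matVec (A * A) e = (c ^ 2 * (ω : ℂ) ^ 2) • e := by
    rw [matVec_mul, hAe, matVec_smul_vec, hA, matVec_smul_mat, hHv, smul_smul, smul_smul]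
    ring_nf
  set μ : ℂ := c ^ 2 * (ω : ℂ) ^ 2 with hμdef
  have hEven : ∀ m : ℕ, matVec (A ^ (2 * m)) e = μ ^ m • e := by
    intro m
    induction m with
    | zero => simp [matVec_one]
    | succ m ih =>
      have : 2 * (m + 1) = 2 * m + 2 := by ring
      rw [this, pow_add, matVec_mul, pow_two, hA2e, matVec_smul_vec, ih, smul_smul, pow_succ,
        mul_comm]
  have hOdd : ∀ m : ℕ, matVec (A ^ (2 * m + 1)) e = (μ ^ m * c) • v := by
    intro m
    rw [pow_succ', matVec_mul, hEven, matVec_smul_vec, hAe, smul_smul]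
  -- the exponential as a tsum applied to e
  letI : SeminormedRing (Matrix (Fin n) (Fin n) ℂ) := Matrix.linftyOpSemiNormedRing
  letI : NormedRing (Matrix (Fin n) (Fin n) ℂ) := Matrix.linftyOpNormedRing
  letI : NormedAlgebra ℂ (Matrix (Fin n) (Fin n) ℂ) := Matrix.linftyOpNormedAlgebra
  have hsummable : Summable (fun k : ℕ => ((k.factorial : ℂ))⁻¹ • A ^ k) :=
    NormedSpace.expSeries_summable' A
  let Tl : Matrix (Fin n) (Fin n) ℂ →ₗ[ℂ] EuclideanSpace ℂ (Fin n) :=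
    { toFun := fun M => matVec M e
      map_add' := by intro M N; simp [matVec, _root_.map_add]
      map_smul' := by intro a M; simp [matVec, _root_.map_smul] }
  let T : Matrix (Fin n) (Fin n) ℂ →L[ℂ] EuclideanSpace ℂ (Fin n) :=
    ⟨Tl, Tl.continuous_of_finiteDimensional⟩
  have key : matVec (NormedSpace.exp A) e = ∑' k : ℕ, ((k.factorial : ℂ))⁻¹ • matVec (A ^ k) e := by
    calc matVec (NormedSpace.exp A) e = T (NormedSpace.exp A) := rfl
      _ = T (∑' k : ℕ, ((k.factorial : ℂ))⁻¹ • A ^ k) := by rw [NormedSpace.exp_eq_tsum (𝕂 := ℂ)]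
      _ = ∑' k : ℕ, T (((k.factorial : ℂ))⁻¹ • A ^ k) := T.map_tsum hsummable
      _ = ∑' k : ℕ, ((k.factorial : ℂ))⁻¹ • matVec (A ^ k) e := by
          refine tsum_congr fun k => ?_
          simp [T, Tl]
          rfl
  -- the angle
  set θ : ℝ := Real.arccos γ with hθdef
  have htω : t * ω = θ := by rw [ht]; field_simp
  have hθC : (t : ℂ) * (ω : ℂ) = (θ : ℂ) := by exact_mod_cast congrArg (Complex.ofReal) htω
  have hμ : μ = -((θ : ℂ)) ^ 2 := by
    rw [hμdef, hc, ← hθC]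
    ring_nf
    rw [Complex.I_sq]
    ring
  have hcosθ : Real.cos θ = γ := Real.cos_arccos (by linarith) hγ1
  have hsinθ : Real.sin θ = Real.sqrt (1 - γ ^ 2) := Real.sin_arccos γ
  -- even part
  have heven : HasSum (fun m : ℕ => (((2 * m).factorial : ℂ))⁻¹ • matVec (A ^ (2 * m)) e)
      ((γ : ℂ) • e) := by
    have hs : HasSum (fun m : ℕ => (((2 * m).factorial : ℂ))⁻¹ * μ ^ m) ((γ : ℂ)) := by
      have := Complex.hasSum_cos (θ : ℂ)
      have hval : Complex.cos (θ : ℂ) = (γ : ℂ) := by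
        rw [← Complex.ofReal_cos, hcosθ]
      rw [hval] at this
      convert this using 2 with m
      rw [hμ, neg_pow, ← pow_mul]
      field_simp
    have := hs.smul_const e
    convert this using 2 with m
    rw [hEven, smul_smul]
  -- odd part
  have hodd : HasSum (fun m : ℕ => (((2 * m + 1).factorial : ℂ))⁻¹ • matVec (A ^ (2 * m + 1)) e)
      ((-(Complex.I * ((Real.sqrt (1 - γ ^ 2) / ω : ℝ) : ℂ))) • v) := by
    have hs : HasSum (fun m : ℕ => (((2 * m + 1).factorial : ℂ))⁻¹ * (μ ^ m * c))
        (-(Complex.I * ((Real.sqrt (1 - γ ^ 2) / ω : ℝ) : ℂ))) := by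
      have h1 := (Complex.hasSum_sin (θ : ℂ)).mul_left (-(Complex.I) / (ω : ℂ))
      have hval : -(Complex.I) / (ω : ℂ) * Complex.sin (θ : ℂ)
          = -(Complex.I * ((Real.sqrt (1 - γ ^ 2) / ω : ℝ) : ℂ)) := by
        rw [← Complex.ofReal_sin, hsinθ]
        push_cast
        field_simp
      rw [hval] at h1
      convert h1 using 2 with m
      · rfl
      rw [hμ, hc, neg_pow, ← pow_mul]
      have ht' : (t : ℂ) = (θ : ℂ) / (ω : ℂ) := by
        field_simp [← hθC]
        exact hθC
      rw [ht']
      field_simp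
      ring
    have := hs.smul_const v
    convert this using 2 with m
    rw [hOdd, smul_smul]
  have htotal : HasSum (fun k : ℕ => ((k.factorial : ℂ))⁻¹ • matVec (A ^ k) e)
      ((γ : ℂ) • e + (-(Complex.I * ((Real.sqrt (1 - γ ^ 2) / ω : ℝ) : ℂ))) • v) :=
    HasSum.even_add_odd heven hodd
  rw [key, htotal.tsum_eq, neg_smul, ← sub_eq_add_neg]
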